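/- arXiv:2002.10921 — 6 statements merged into one kernel-verified Lean document; each statement's English description precedes it below -/
import Mathlib

section
/- Let E, ε, H, q, β_q be as in the context. Then there exists a unique group homomorphism φ : E → H such that for all x ∈ E and all y ∈ H, the commutator ⁅x, y⁆ equals ε raised to the power β_q(φ(x), y) (the exponent being the value in {0,1} of β_q(φ(x), y) ∈ ZMod 2). -/
open scoped commutatorElement

lemma aux_exists_unique_rep {G : Type*} [CommGroup G] [Finite G]
    (h2 : ∀ a : G, a ^ 2 = 1)
    (β : G → G → ZMod 2)
    (haddl : ∀ y₁ y₂ z : G, β (y₁ * y₂) z = β y₁ z + β y₂ z)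
    (hsymm : ∀ z y : G, β z y = β y z)
    (hnd : ∀ z : G, (∀ y : G, β z y = 0) → z = 1)
    (f : G → ZMod 2) (hf : ∀ y₁ y₂ : G, f (y₁ * y₂) = f y₁ + f y₂) :
    ∃! z : G, ∀ y : G, β z y = f y := by
  classical
  haveI : Fact (Nat.Prime 2) := ⟨Nat.prime_two⟩
  letI : Module (ZMod 2) (Additive G) := AddCommGroup.zmodModule (n := 2) (by
    intro x
    show (2 : ℕ) • x = 0
    rw [← ofMul_toMul x, ← ofMul_pow, h2, ofMul_one])
  have haddr : ∀ z y₁ y₂ : G, β z (y₁ * y₂) = β z y₁ + β z y₂ := fun z y₁ y₂ => by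
    rw [hsymm z (y₁ * y₂), haddl, hsymm y₁ z, hsymm y₂ z]
  have honer : ∀ z : G, β z 1 = 0 := fun z => by
    have h := haddr z 1 1
    rw [mul_one] at h
    exact left_eq_add.mp h
  have honel : ∀ z : G, β (1 : G) z = 0 := fun z => by rw [hsymm]; exact honer z
  have hf1 : f 1 = 0 := by
    have h := hf 1 1
    rw [mul_one] at h
    exact left_eq_add.mp h
  let bz : G → Module.Dual (ZMod 2) (Additive G) := fun z =>
    AddMonoidHom.toZModLinearMap 2
      { toFun := fun v => β z v.toMul
        map_zero' := honer z
        map_add' := fun v w => haddr z v.toMul w.toMul }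
  let B : Additive G →ₗ[ZMod 2] Module.Dual (ZMod 2) (Additive G) :=
    AddMonoidHom.toZModLinearMap 2
      { toFun := fun v => bz v.toMul
        map_zero' := LinearMap.ext fun u => honel u.toMul
        map_add' := fun v w => LinearMap.ext fun u => haddl v.toMul w.toMul u.toMul }
  haveI : Module.Finite (ZMod 2) (Additive G) := Module.Finite.of_finite
  have hBinj : Function.Injective B := by
    rw [injective_iff_map_eq_zero]
    intro v hv
    have h1 : v.toMul = 1 := by
      apply hnd
      intro y
      exact LinearMap.congr_fun hv (Additive.ofMul y)
    rw [← ofMul_toMul v, h1, ofMul_one]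
  have hBsurj : Function.Surjective B :=
    (LinearMap.injective_iff_surjective_of_finrank_eq_finrank
      (Subspace.dual_finrank_eq).symm).mp hBinj
  let F : Module.Dual (ZMod 2) (Additive G) :=
    AddMonoidHom.toZModLinearMap 2
      { toFun := fun v => f v.toMul
        map_zero' := hf1
        map_add' := fun v w => hf v.toMul w.toMul }
  obtain ⟨v, hv⟩ := hBsurj F
  have hrep : ∀ y : G, β v.toMul y = f y := fun y => by
    exact LinearMap.congr_fun hv (Additive.ofMul y)
  have hadd0 : ∀ a : ZMod 2, a + a = 0 := by intro a; fin_cases a <;> rfl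
  refine ⟨v.toMul, hrep, fun z hz => ?_⟩
  have h0 : z * Additive.toMul v = 1 := by
    apply hnd
    intro y
    rw [haddl, hz y, hrep y, hadd0]
  have hvv : Additive.toMul v * Additive.toMul v = 1 := by
    have := h2 v.toMul
    rwa [pow_two] at this
  rw [eq_inv_of_mul_eq_one_left h0, inv_eq_of_mul_eq_one_left hvv]

/-- Let `E` be a finite extraspecial-type 2-group with central element `ε` (`ε ≠ 1`, `ε² = 1`,
all squares and commutators lie in `{1, ε}`), let `H` be a commutative subgroup of exponent 2
with `ε ∉ H`, and let `q : H → ZMod 2` be a non-singular quadratic form (i.e.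
`β_q(y,z) = q(yz) + q(y) + q(z)` is bilinear and non-degenerate). Then there is a unique
group homomorphism `φ : E → H` such that `⁅x, y⁆ = ε ^ β_q(φ x, y)` for all `x ∈ E`, `y ∈ H`. -/
theorem exists_unique_phi {E : Type*} [Group E] [Finite E] (ε : E)
    (hεc : ε ∈ Subgroup.center E) (hε1 : ε ≠ 1) (hε2 : ε ^ 2 = 1)
    (hsq : ∀ x : E, x ^ 2 = 1 ∨ x ^ 2 = ε)
    (hcm : ∀ x y : E, ⁅x, y⁆ = 1 ∨ ⁅x, y⁆ = ε)
    (H : Subgroup E)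
    (hHcomm : ∀ a b : H, a * b = b * a)
    (hH2 : ∀ a : H, a ^ 2 = 1)
    (hεH : ε ∉ H)
    (q : H → ZMod 2)
    (hbil : ∀ y₁ y₂ z : H,
      q (y₁ * y₂ * z) + q (y₁ * y₂) + q z =
        (q (y₁ * z) + q y₁ + q z) + (q (y₂ * z) + q y₂ + q z))
    (hnd : ∀ z : H, (∀ y : H, q (z * y) + q z + q y = 0) → z = 1) :
    ∃! φ : E →* H, ∀ (x : E) (y : H),
      ⁅x, (y : E)⁆ = ε ^ (q (φ x * y) + q (φ x) + q y).val := by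
  classical
  -- commutators are central
  have hcent : ∀ x y g : E, g * ⁅x, y⁆ = ⁅x, y⁆ * g := by
    intro x y g
    rcases hcm x y with h | h
    · rw [h, mul_one, one_mul]
    · rw [h]; exact Subgroup.mem_center_iff.mp hεc g
  have hmulL : ∀ a b c : E, ⁅a * b, c⁆ = ⁅a, c⁆ * ⁅b, c⁆ := by
    intro a b c
    calc ⁅a * b, c⁆ = a * ⁅b, c⁆ * a⁻¹ * ⁅a, c⁆ := by
          simp only [commutatorElement_def]; group
      _ = ⁅b, c⁆ * a * a⁻¹ * ⁅a, c⁆ := by rw [hcent b c a]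
      _ = ⁅b, c⁆ * ⁅a, c⁆ := by group
      _ = ⁅a, c⁆ * ⁅b, c⁆ := hcent a c ⁅b, c⁆
  have hmulR : ∀ a b c : E, ⁅a, b * c⁆ = ⁅a, b⁆ * ⁅a, c⁆ := by
    intro a b c
    calc ⁅a, b * c⁆ = ⁅a, b⁆ * (b * ⁅a, c⁆ * b⁻¹) := by
          simp only [commutatorElement_def]; group
      _ = ⁅a, b⁆ * (⁅a, c⁆ * b * b⁻¹) := by rw [hcent a c b]
      _ = ⁅a, b⁆ * ⁅a, c⁆ := by group
  have hord : orderOf ε = 2 := orderOf_eq_prime hε2 hε1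
  have hpowadd : ∀ a b : ZMod 2, ε ^ a.val * ε ^ b.val = ε ^ (a + b).val := by
    intro a b
    have hmod : ∀ n : ℕ, ε ^ (n % 2) = ε ^ n := by
      intro n
      conv_lhs => rw [show (2:ℕ) = orderOf ε from hord.symm]
      exact pow_mod_orderOf ε n
    rw [← pow_add, ZMod.val_add, hmod]
  have hεinj : ∀ a b : ZMod 2, ε ^ a.val = ε ^ b.val → a = b := by
    intro a b h
    apply ZMod.val_injective
    have ha := ZMod.val_lt a
    have hb := ZMod.val_lt b
    have ha' : a.val = 0 ∨ a.val = 1 := by omega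
    have hb' : b.val = 0 ∨ b.val = 1 := by omega
    rcases ha' with h0 | h0 <;> rcases hb' with h1 | h1 <;>
      rw [h0, h1] at h ⊢ <;>
      simp only [pow_zero, pow_one] at h <;>
      first
        | rfl
        | exact absurd h hε1
        | exact absurd h.symm hε1
  set c : E → H → ZMod 2 := fun x y => if ⁅x, (y : E)⁆ = 1 then 0 else 1 with hc_def
  have hc : ∀ (x : E) (y : H), ⁅x, (y : E)⁆ = ε ^ (c x y).val := by
    intro x y
    rcases hcm x (y : E) with h | h
    · simp only [hc_def, if_pos h, ZMod.val_zero, pow_zero]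
      exact h
    · have hne : ⁅x, (y : E)⁆ ≠ 1 := by rw [h]; exact hε1
      simp only [hc_def, if_neg hne, ZMod.val_one, pow_one]
      exact h
  have hcaddx : ∀ (a b : E) (y : H), c (a * b) y = c a y + c b y := by
    intro a b y
    apply hεinj
    rw [← hpowadd, ← hc, ← hc, ← hc]
    exact hmulL a b y
  have hcaddy : ∀ (x : E) (y₁ y₂ : H), c x (y₁ * y₂) = c x y₁ + c x y₂ := by
    intro x y₁ y₂
    apply hεinj
    rw [← hpowadd, ← hc, ← hc, ← hc]
    push_cast
    exact hmulR x y₁ y₂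
  letI : CommGroup H := { (inferInstance : Group H) with mul_comm := hHcomm }
  have key : ∀ x : E, ∃! z : H, ∀ y : H, q (z * y) + q z + q y = c x y := by
    intro x
    exact aux_exists_unique_rep hH2 (fun z y => q (z * y) + q z + q y) hbil
      (fun z y => by
        show q (z * y) + q z + q y = q (y * z) + q y + q z
        rw [hHcomm z y]; ring)
      hnd (c x) (hcaddy x)
  choose φf hφ1 hφ2 using key
  have hmul : ∀ a b : E, φf (a * b) = φf a * φf b := by
    intro a b
    refine (hφ2 (a * b) (φf a * φf b) fun y => ?_).symm
    rw [hbil, hφ1 a y, hφ1 b y, ← hcaddx]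
  refine ⟨MonoidHom.mk' φf hmul, fun x y => ?_, fun ψ hψ => ?_⟩
  · show ⁅x, (y : E)⁆ = ε ^ (q (φf x * y) + q (φf x) + q y).val
    rw [hφ1 x y]
    exact hc x y
  · ext x
    have hx : ψ x = φf x := by
      apply hφ2
      intro y
      apply hεinj
      rw [← hc]
      exact (hψ x y).symm
    rw [hx]; rfl
end

section
/- Let E, ε, H, q, β_q, ξ and ℝE^± be as in the context, and let φ : E → H be the unique group homomorphism with ⁅x, y⁆ = ε^{β_q(φ(x), y)} for all x ∈ E, y ∈ H. Then for every x ∈ E one has, in ℝE^±: (x⁻¹)‾ * ξ * x̄ * ξ = (-1)^{q(φ(x))} · (φ(x))‾. In particular the commutator [x̄, ξ] lies in the image of Z(E)·H. -/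
/-- The relation identifying the image of `ε` in the real group algebra with `-1`.
`RingQuot` of this relation is the quotient of `MonoidAlgebra ℝ E` by the two-sided ideal
generated by `ε + 1`. -/
def epsRel {E : Type*} [Group E] (ε : E) :
    MonoidAlgebra ℝ E → MonoidAlgebra ℝ E → Prop :=
  fun a b => a = MonoidAlgebra.of ℝ E ε ∧ b = -1

/-- The image `x̄` of a group element `x ∈ E` in `ℝE^± = ℝE/(ε = -1)`. -/
noncomputable def embBar {E : Type*} [Group E] (ε : E) (x : E) : RingQuot (epsRel ε) :=
  RingQuot.mkRingHom (epsRel ε) (MonoidAlgebra.of ℝ E x)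

/-- The element `ξ = |H|^{-1/2} ∑_{z ∈ H} (-1)^{q z} z̄` of `ℝE^±`. -/
noncomputable def xiElt {E : Type*} [Group E] (ε : E) (H : Subgroup E) [Fintype H]
    (q : H → ZMod 2) : RingQuot (epsRel ε) :=
  ((Nat.card H : ℝ) ^ (-1/2 : ℝ)) •
    ∑ z : H, ((-1 : ℝ) ^ (q z).val) • embBar ε (z : E)

/-- Auxiliary: the polar form of `q`. -/
private def Bq {H : Type*} [Mul H] (q : H → ZMod 2) (a b : H) : ZMod 2 :=
  q (a * b) + q a + q b

private lemma embBar_mul {E : Type*} [Group E] (ε : E) (x y : E) :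
    embBar ε x * embBar ε y = embBar ε (x * y) := by
  simp [embBar, ← map_mul]

private lemma embBar_eps {E : Type*} [Group E] (ε : E) : embBar ε ε = -1 := by
  have h : RingQuot.mkRingHom (epsRel ε) (MonoidAlgebra.of ℝ E ε) =
      RingQuot.mkRingHom (epsRel ε) (-1) :=
    RingQuot.mkRingHom_rel ⟨rfl, rfl⟩
  simpa [embBar] using h

private lemma chi_add (a b : ZMod 2) :
    (-1 : ℝ) ^ ((a + b).val) = (-1 : ℝ) ^ a.val * (-1 : ℝ) ^ b.val := by
  have key : ∀ c : ZMod 2, c = 0 ∨ c = 1 := by decide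
  rcases key a with rfl | rfl <;> rcases key b with rfl | rfl <;>
    simp [ZMod.val_one, show (1 + 1 : ZMod 2) = 0 from rfl]

open scoped commutatorElement

/-- In the setting of Lemma `construct:holomorph`, if `φ : E → H` is the homomorphism with
`⁅x, y⁆ = ε^{β_q(φ x, y)}` for all `x ∈ E`, `y ∈ H`, then
`(x⁻¹)‾ * ξ * x̄ * ξ = (-1)^{q(φ x)} (φ x)‾` in `ℝE^±` for every `x ∈ E`. -/
theorem commutator_xi {E : Type*} [Group E] [Finite E] (ε : E)
    (hεc : ε ∈ Subgroup.center E) (hε1 : ε ≠ 1) (hε2 : ε ^ 2 = 1)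
    (hsq : ∀ x : E, x ^ 2 = 1 ∨ x ^ 2 = ε)
    (hcm : ∀ x y : E, ⁅x, y⁆ = 1 ∨ ⁅x, y⁆ = ε)
    (H : Subgroup E) [Fintype H]
    (hHcomm : ∀ a b : H, a * b = b * a)
    (hH2 : ∀ a : H, a ^ 2 = 1)
    (hεH : ε ∉ H)
    (q : H → ZMod 2)
    (hbil : ∀ y₁ y₂ z : H,
      q (y₁ * y₂ * z) + q (y₁ * y₂) + q z =
        (q (y₁ * z) + q y₁ + q z) + (q (y₂ * z) + q y₂ + q z))
    (hnd : ∀ z : H, (∀ y : H, q (z * y) + q z + q y = 0) → z = 1)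
    (φ : E →* H)
    (hφ : ∀ (x : E) (y : H),
      ⁅x, (y : E)⁆ = ε ^ (q (φ x * y) + q (φ x) + q y).val) :
    ∀ x : E,
      embBar ε x⁻¹ * xiElt ε H q * embBar ε x * xiElt ε H q =
        ((-1 : ℝ) ^ (q (φ x)).val) • embBar ε ((φ x : E)) := by
  classical
  intro x
  have hmulself : ∀ a : H, a * a = 1 := fun a => by
    have h := hH2 a; rwa [pow_two] at h
  have hinvH : ∀ a : H, a⁻¹ = a := fun a => inv_eq_of_mul_eq_one_right (hmulself a)
  have q1 : q 1 = 0 := by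
    have h := hbil 1 1 1
    simp only [one_mul, mul_one] at h
    revert h; generalize q 1 = r; revert r; decide
  have hBadd : ∀ a b c : H, Bq q (a * b) c = Bq q a c + Bq q b c := fun a b c => hbil a b c
  have hBsymm : ∀ a b : H, Bq q a b = Bq q b a := by
    intro a b
    simp only [Bq, hHcomm a b]
    ring
  have hBadd' : ∀ a b c : H, Bq q a (b * c) = Bq q a b + Bq q a c := by
    intro a b c
    rw [hBsymm a (b * c), hBadd, hBsymm b a, hBsymm c a]
  have hB1 : ∀ z : H, Bq q z 1 = 0 := by
    intro z
    simp only [Bq, mul_one, q1]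
    generalize q z = r; revert r; decide
  have hcard_pos : 0 < (Nat.card H : ℝ) := by
    have : 0 < Nat.card H := Nat.card_pos
    exact_mod_cast this
  -- character sum
  have hsum : ∀ v : H, (∑ z : H, (-1 : ℝ) ^ (Bq q z v).val) =
      if v = 1 then (Nat.card H : ℝ) else 0 := by
    intro v
    by_cases hv : v = 1
    · subst hv
      simp [hB1, Nat.card_eq_fintype_card]
    · rw [if_neg hv]
      obtain ⟨y, hy⟩ : ∃ y : H, Bq q v y ≠ 0 := by
        by_contra h
        push_neg at h
        exact hv (hnd v h)
      have hy1 : Bq q y v = 1 := by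
        rw [hBsymm y v]
        revert hy; generalize Bq q v y = r; revert r; decide
      have hre : (∑ z : H, (-1 : ℝ) ^ (Bq q z v).val)
          = ∑ z : H, (-1 : ℝ) ^ (Bq q (y * z) v).val :=
        (Fintype.sum_equiv (Equiv.mulLeft y)
          (fun z : H => (-1 : ℝ) ^ (Bq q (y * z) v).val)
          (fun z : H => (-1 : ℝ) ^ (Bq q z v).val) (fun z => rfl)).symm
      have hterm : ∀ z : H, (-1 : ℝ) ^ (Bq q (y * z) v).val
          = -(-1 : ℝ) ^ (Bq q z v).val := by
        intro z
        rw [hBadd, hy1, chi_add]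
        norm_num [ZMod.val_one]
      have hSS : (∑ z : H, (-1 : ℝ) ^ (Bq q z v).val)
          = -∑ z : H, (-1 : ℝ) ^ (Bq q z v).val := by
        nth_rewrite 1 [hre]
        simp [hterm]
      linarith [hSS]
  -- conjugation
  have hconj : ∀ (w : E) (z : H), embBar ε (w⁻¹ * z * w)
      = ((-1 : ℝ) ^ (Bq q (φ w) z).val) • embBar ε (z : E) := by
    intro w z
    have hphi : φ w⁻¹ = φ w := by rw [map_inv, hinvH]
    have hc : ⁅w⁻¹, (z : E)⁆ = ε ^ (Bq q (φ w) z).val := by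
      have h := hφ w⁻¹ z
      rw [hphi] at h
      exact h
    rw [commutatorElement_def, inv_inv] at hc
    have hw : w⁻¹ * (z : E) * w = ε ^ (Bq q (φ w) z).val * z := by
      rw [← hc]; group
    rw [hw, ← embBar_mul]
    have he : embBar ε (ε ^ (Bq q (φ w) z).val)
        = (-1 : RingQuot (epsRel ε)) ^ (Bq q (φ w) z).val := by
      rw [← embBar_eps]; simp only [embBar, ← map_pow]
    rw [he, Algebra.smul_def, map_pow, map_neg, map_one]
  set c : ℝ := (Nat.card H : ℝ) ^ (-1/2 : ℝ) with hc_def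
  have hcc : c * c * (Nat.card H : ℝ) = 1 := by
    have h2 : c * c = (Nat.card H : ℝ) ^ (-1 : ℝ) := by
      rw [hc_def, ← Real.rpow_add hcard_pos]; norm_num
    rw [h2, Real.rpow_neg_one]
    exact inv_mul_cancel₀ (ne_of_gt hcard_pos)
  set f : H → ℝ := fun z => (-1 : ℝ) ^ (q z).val * (-1 : ℝ) ^ (Bq q (φ x) z).val with hf_def
  set g : H → ℝ := fun z => (-1 : ℝ) ^ (q z).val with hg_def
  have step1 : embBar ε x⁻¹ * xiElt ε H q * embBar ε x
      = c • ∑ z : H, f z • embBar ε (z : E) := by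
    simp only [xiElt, hc_def]
    rw [mul_smul_comm, smul_mul_assoc]
    congr 1
    rw [Finset.mul_sum, Finset.sum_mul]
    refine Finset.sum_congr rfl fun z _ => ?_
    calc embBar ε x⁻¹ * ((-1 : ℝ) ^ (q z).val • embBar ε (z : E)) * embBar ε x
        = (-1 : ℝ) ^ (q z).val • (embBar ε x⁻¹ * embBar ε (z : E) * embBar ε x) := by
          rw [mul_smul_comm, smul_mul_assoc]
      _ = (-1 : ℝ) ^ (q z).val • embBar ε (x⁻¹ * z * x) := by
          rw [embBar_mul, embBar_mul]
      _ = f z • embBar ε (z : E) := by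
          rw [hconj x z, smul_smul]
  have step2 : (c • ∑ z : H, f z • embBar ε (z : E)) * xiElt ε H q
      = (c * c) • ∑ z : H, ∑ w : H, (f z * g w) • embBar ε ((z * w : H) : E) := by
    simp only [xiElt, hc_def, hg_def]
    rw [smul_mul_smul_comm, Finset.sum_mul_sum]
    congr 1
    refine Finset.sum_congr rfl fun z _ => Finset.sum_congr rfl fun w _ => ?_
    rw [smul_mul_smul_comm, embBar_mul]
    norm_cast
  have step3 : ∀ z : H, (∑ w : H, (f z * g w) • embBar ε ((z * w : H) : E))
      = ∑ u : H, (f z * g (z * u)) • embBar ε (u : E) := by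
    intro z
    have h := Fintype.sum_equiv (Equiv.mulLeft z)
      (fun u : H => (f z * g (z * u)) • embBar ε ((z * (z * u) : H) : E))
      (fun w : H => (f z * g w) • embBar ε ((z * w : H) : E)) (fun u => rfl)
    rw [← h]
    refine Fintype.sum_congr _ _ fun u => ?_
    rw [← mul_assoc, hmulself, one_mul]
  have scal : ∀ z u : H, f z * g (z * u)
      = (-1 : ℝ) ^ (q u).val * (-1 : ℝ) ^ (Bq q z (φ x * u)).val := by
    intro z u
    simp only [hf_def, hg_def]
    rw [mul_assoc, ← chi_add, ← chi_add, ← chi_add]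
    have key : q z + (Bq q (φ x) z + q (z * u)) = q u + Bq q z (φ x * u) := by
      rw [hBadd' z (φ x) u, hBsymm (φ x) z]
      have e1 : q (z * u) = Bq q z u + q z + q u := by
        simp only [Bq]
        generalize q (z * u) = a
        generalize q z = b
        generalize q u = cc
        revert a b cc; decide
      rw [e1]
      generalize q z = a
      generalize Bq q z (φ x) = b
      generalize Bq q z u = d
      generalize q u = e
      revert a b d e; decide
    rw [key]
  have step4 : (∑ z : H, ∑ u : H,
        ((-1 : ℝ) ^ (q u).val * (-1 : ℝ) ^ (Bq q z (φ x * u)).val) • embBar ε (u : E))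
      = ∑ u : H, ((-1 : ℝ) ^ (q u).val *
          ∑ z : H, (-1 : ℝ) ^ (Bq q z (φ x * u)).val) • embBar ε (u : E) := by
    rw [Finset.sum_comm]
    refine Fintype.sum_congr _ _ fun u => ?_
    rw [← Finset.sum_smul, ← Finset.mul_sum]
  have hcond : ∀ u : H, (φ x * u = 1) ↔ (u = φ x) := by
    intro u
    constructor
    · intro h
      have := inv_eq_of_mul_eq_one_right h
      rw [hinvH] at this
      exact this.symm
    · intro h; rw [h]; exact hmulself (φ x)
  have step5 : (∑ u : H, ((-1 : ℝ) ^ (q u).val *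
        ∑ z : H, (-1 : ℝ) ^ (Bq q z (φ x * u)).val) • embBar ε (u : E))
      = ((-1 : ℝ) ^ (q (φ x)).val * (Nat.card H : ℝ)) • embBar ε ((φ x : H) : E) := by
    have : ∀ u : H, ((-1 : ℝ) ^ (q u).val *
        ∑ z : H, (-1 : ℝ) ^ (Bq q z (φ x * u)).val) • embBar ε (u : E)
        = if u = φ x then ((-1 : ℝ) ^ (q u).val * (Nat.card H : ℝ)) • embBar ε (u : E)
          else 0 := by
      intro u
      rw [hsum (φ x * u)]
      by_cases hu : u = φ x
      · rw [if_pos ((hcond u).mpr hu), if_pos hu]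
      · rw [if_neg (fun h => hu ((hcond u).mp h)), if_neg hu]
        simp
    rw [Finset.sum_congr rfl (fun u _ => this u)]
    rw [Finset.sum_ite_eq' Finset.univ (φ x)
      (fun u => ((-1 : ℝ) ^ (q u).val * (Nat.card H : ℝ)) • embBar ε (u : E))]
    simp
  calc embBar ε x⁻¹ * xiElt ε H q * embBar ε x * xiElt ε H q
      = (c • ∑ z : H, f z • embBar ε (z : E)) * xiElt ε H q := by rw [step1]
    _ = (c * c) • ∑ z : H, ∑ w : H, (f z * g w) • embBar ε ((z * w : H) : E) := step2
    _ = (c * c) • ∑ z : H, ∑ u : H,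
          ((-1 : ℝ) ^ (q u).val * (-1 : ℝ) ^ (Bq q z (φ x * u)).val) • embBar ε (u : E) := by
        congr 1
        refine Fintype.sum_congr _ _ fun z => ?_
        rw [step3 z]
        exact Fintype.sum_congr _ _ fun u => by rw [scal z u]
    _ = (c * c) • (((-1 : ℝ) ^ (q (φ x)).val * (Nat.card H : ℝ)) • embBar ε ((φ x : H) : E)) := by
        rw [step4, step5]
    _ = ((-1 : ℝ) ^ (q (φ x)).val) • embBar ε ((φ x : E)) := by
        rw [smul_smul]
        congr 1
        calc c * c * ((-1 : ℝ) ^ (q (φ x)).val * (Nat.card H : ℝ))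
            = (c * c * (Nat.card H : ℝ)) * (-1 : ℝ) ^ (q (φ x)).val := by ring
          _ = (-1 : ℝ) ^ (q (φ x)).val := by rw [hcc, one_mul]
end

section
/- Let B be the ℝ-linear operator on the space of functions V → ℝ defined by (B f)(u) = (1/8)·∑_{v ∈ V} (-1)^{w₂(v)} f(u + v). Then B ∘ B is the identity: B(B f) = f for every f : V → ℝ. -/
/-- The Hamming weight of a vector in `𝔽₂⁶`. -/
def wt (v : Fin 6 → ZMod 2) : ℕ := (Finset.univ.filter fun i => v i = 1).card

/-- The quadratic form `w₂(v) = C(wt v, 2) mod 2` on `𝔽₂⁶`. -/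
def w2 (v : Fin 6 → ZMod 2) : ZMod 2 := (Nat.choose (wt v) 2 : ZMod 2)

/-- The standard bilinear form `⟨u, v⟩ = ∑ i, u i * v i` on `𝔽₂⁶`. -/
def ip (u v : Fin 6 → ZMod 2) : ZMod 2 := ∑ i, u i * v i

/-- The operator `B` on functions `𝔽₂⁶ → ℝ`, `(B f)(u) = (1/8) ∑_v (-1)^{w₂(v)} f(u+v)`
(the grey block of `ξ_g` acting on `4096_x`). -/
noncomputable def Bop (f : (Fin 6 → ZMod 2) → ℝ) : (Fin 6 → ZMod 2) → ℝ :=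
  fun u => (1/8) * ∑ v : Fin 6 → ZMod 2, (-1 : ℝ) ^ (w2 v).val * f (u + v)

set_option maxRecDepth 10000 in
lemma key : ∀ w : Fin 6 → ZMod 2,
    (∑ v : Fin 6 → ZMod 2, (-1:ℤ)^((w2 v).val + (w2 (v+w)).val)) = if w = 0 then 64 else 0 := by
  decide

lemma keyR (w : Fin 6 → ZMod 2) :
    (∑ v : Fin 6 → ZMod 2, (-1:ℝ)^((w2 v).val + (w2 (v+w)).val))
      = if w = 0 then 64 else 0 := by
  have h := congrArg (fun z : ℤ => (z : ℝ)) (key w)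
  push_cast at h
  simpa using h

lemma add_self (v : Fin 6 → ZMod 2) : v + v = 0 := by
  funext i
  have h : ∀ x : ZMod 2, x + x = 0 := by decide
  exact h (v i)

/-- `B ∘ B` is the identity. -/
theorem Bop_Bop_eq_id : ∀ f : (Fin 6 → ZMod 2) → ℝ, Bop (Bop f) = f := by
  intro f
  funext u
  show (1/8 : ℝ) * ∑ v : Fin 6 → ZMod 2, (-1 : ℝ) ^ (w2 v).val *
      ((1/8) * ∑ v' : Fin 6 → ZMod 2, (-1 : ℝ) ^ (w2 v').val * f (u + v + v')) = f u
  have step1 : ∀ v : Fin 6 → ZMod 2,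
      (∑ v' : Fin 6 → ZMod 2, (-1 : ℝ) ^ (w2 v').val * f (u + v + v'))
      = ∑ w : Fin 6 → ZMod 2, (-1 : ℝ) ^ (w2 (v + w)).val * f (u + w) := by
    intro v
    refine Fintype.sum_equiv (Equiv.addLeft v) _ _ fun w => ?_
    have h : v + (v + w) = w := by rw [← add_assoc, add_self, zero_add]
    simp only [Equiv.coe_addLeft]
    rw [h, ← add_assoc]
  calc (1/8 : ℝ) * ∑ v : Fin 6 → ZMod 2, (-1 : ℝ) ^ (w2 v).val *
      ((1/8) * ∑ v' : Fin 6 → ZMod 2, (-1 : ℝ) ^ (w2 v').val * f (u + v + v'))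
      = (1/64 : ℝ) * ∑ v : Fin 6 → ZMod 2, ∑ w : Fin 6 → ZMod 2,
          (-1 : ℝ) ^ ((w2 v).val + (w2 (v + w)).val) * f (u + w) := by
        simp only [step1, Finset.mul_sum]
        refine Finset.sum_congr rfl fun v _ => Finset.sum_congr rfl fun w _ => ?_
        rw [pow_add]
        ring
    _ = (1/64 : ℝ) * ∑ w : Fin 6 → ZMod 2,
          (∑ v : Fin 6 → ZMod 2, (-1 : ℝ) ^ ((w2 v).val + (w2 (v + w)).val)) * f (u + w) := by
        rw [Finset.sum_comm]
        congr 1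
        refine Finset.sum_congr rfl fun w _ => ?_
        rw [Finset.sum_mul]
    _ = f u := by
        simp only [keyR, ite_mul, zero_mul]
        rw [Finset.sum_ite_eq' Finset.univ (0 : Fin 6 → ZMod 2) (fun w => (64 : ℝ) * f (u + w))]
        simp
end

section
/- Let A and B be the ℝ-linear operators on the space of functions V → ℝ defined by (A f)(u) = -(-1)^{w₂(u)}·f(u) and (B f)(u) = (1/8)·∑_{v ∈ V} (-1)^{w₂(v)} f(u + v). Then (A ∘ B)³ is the identity: A(B(A(B(A(B f))))) = f for every f : V → ℝ. -/
/-- The operator `A` on functions `𝔽₂⁶ → ℝ`, `(A f)(u) = -(-1)^{w₂(u)} f(u)`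
(the grey block of `ξ_γ` acting on `4096_x`). -/
noncomputable def Aop (f : (Fin 6 → ZMod 2) → ℝ) : (Fin 6 → ZMod 2) → ℝ :=
  fun u => -(-1 : ℝ) ^ (w2 u).val * f u

abbrev V6 := Fin 6 → ZMod 2
noncomputable def S (v : V6) : ℝ := (-1 : ℝ) ^ (w2 v).val

/- ### decidable lemmas (sorried during development) -/
set_option maxRecDepth 1000000 in
set_option maxHeartbeats 12000000 in
lemma polar : ∀ u v : V6,
    w2 (u + v) = (w2 u + w2 v) + ((wt u : ZMod 2) * (wt v : ZMod 2) + ip u v) := by decide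

set_option maxRecDepth 1000000 in
set_option maxHeartbeats 12000000 in
lemma sum_eq_wt : ∀ x : V6, (∑ i, x i) = (wt x : ZMod 2) := by decide

set_option maxRecDepth 1000000 in
set_option maxHeartbeats 12000000 in
lemma gaussZ : ∀ c : V6,
    (∑ v : V6, (-1:ℤ)^((w2 v).val + (ip v c).val)) = -8 * (-1:ℤ)^((w2 c).val) := by decide

set_option maxRecDepth 1000000 in
set_option maxHeartbeats 12000000 in
lemma bsqZ : ∀ t : V6,
    (∑ v : V6, (-1:ℤ)^((w2 v).val + (w2 (v+t)).val)) = if t = 0 then 64 else 0 := by decide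

set_option maxRecDepth 1000000 in
set_option maxHeartbeats 12000000 in
lemma bridge : ∀ u w : V6,
    w2 (fun i => u i + w i + ((wt u : ZMod 2) + (wt w : ZMod 2))) = w2 (u + w) := by decide

/- ### basic facts -/
lemma hom (a b : ZMod 2) : (-1:ℝ)^((a+b).val) = (-1:ℝ)^a.val * (-1:ℝ)^b.val := by
  rw [ZMod.val_add, ← pow_add, ← neg_one_pow_eq_pow_mod_two]

lemma S_sq (v : V6) : S v * S v = 1 := by
  unfold S; rw [← pow_add]; exact Even.neg_one_pow ⟨_, rfl⟩

lemma addself : ∀ x : V6, x + x = 0 := by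
  intro x; funext i
  have : ∀ a : ZMod 2, a + a = 0 := by decide
  exact this (x i)

lemma ip_comm (u v : V6) : ip u v = ip v u := by
  unfold ip; exact Finset.sum_congr rfl (by intros; ring)

lemma gaussR (c : V6) :
    (∑ v : V6, (-1:ℝ)^((w2 v).val + (ip v c).val)) = -8 * (-1:ℝ)^((w2 c).val) := by
  exact_mod_cast gaussZ c

lemma bsqR (t : V6) :
    (∑ v : V6, (-1:ℝ)^((w2 v).val + (w2 (v+t)).val)) = if t = 0 then 64 else 0 := by
  by_cases ht : t = 0
  · rw [if_pos ht]
    have h := bsqZ t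
    rw [if_pos ht] at h
    exact_mod_cast h
  · rw [if_neg ht]
    have h := bsqZ t
    rw [if_neg ht] at h
    exact_mod_cast h

lemma lincomb (u w v : V6) :
    ((wt u:ZMod 2) * (wt v : ZMod 2) + ip u v) + ((wt v:ZMod 2)*(wt w : ZMod 2) + ip v w)
      = ip v (fun i => u i + w i + ((wt u:ZMod 2)+(wt w : ZMod 2))) := by
  have hc : ip u v = ∑ i, v i * u i := Finset.sum_congr rfl fun i _ => mul_comm _ _
  show _ = ∑ i, v i * (u i + w i + ((wt u:ZMod 2)+(wt w : ZMod 2)))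
  simp only [mul_add, Finset.sum_add_distrib, ← Finset.sum_mul]
  rw [sum_eq_wt v, hc]
  unfold ip
  ring

/- ### the key identity ABA = BAB at the level of sign sums -/
lemma keyR_s9 (u w : V6) :
    (∑ v : V6, S v * S (u+v) * S (v+w)) = -8 * (S u * S w * S (u+w)) := by
  have h1 : ∀ v : V6, S v * S (u+v) * S (v+w)
      = (S u * S w) * (-1:ℝ)^((w2 v).val + (ip v (fun i => u i + w i + ((wt u:ZMod 2)+(wt w : ZMod 2)))).val) := by
    intro v
    have e1 : S (u+v) = S u * S v * (-1:ℝ)^(((wt u:ZMod 2) * (wt v : ZMod 2) + ip u v)).val := by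
      unfold S; rw [polar u v, hom, hom]
    have e2 : S (v+w) = S v * S w * (-1:ℝ)^(((wt v:ZMod 2) * (wt w : ZMod 2) + ip v w)).val := by
      unfold S; rw [polar v w, hom, hom]
    have key2 : (-1:ℝ)^(((wt u:ZMod 2) * (wt v : ZMod 2) + ip u v)).val
        * (-1:ℝ)^(((wt v:ZMod 2) * (wt w : ZMod 2) + ip v w)).val
        = (-1:ℝ)^((ip v (fun i => u i + w i + ((wt u:ZMod 2)+(wt w : ZMod 2)))).val) := by
      rw [← hom, lincomb u w v]
    have h2 := S_sq v
    calc S v * S (u+v) * S (v+w)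
        = (S u * S w) * ((S v * ((-1:ℝ)^(((wt u:ZMod 2) * (wt v : ZMod 2) + ip u v)).val
            * (-1:ℝ)^(((wt v:ZMod 2) * (wt w : ZMod 2) + ip v w)).val)) * (S v * S v)) := by
          rw [e1, e2]; ring
      _ = (S u * S w) * (S v * (-1:ℝ)^((ip v (fun i => u i + w i + ((wt u:ZMod 2)+(wt w : ZMod 2)))).val)) := by
          rw [key2, h2]; ring
      _ = (S u * S w) * (-1:ℝ)^((w2 v).val + (ip v (fun i => u i + w i + ((wt u:ZMod 2)+(wt w : ZMod 2)))).val) := by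
          unfold S; rw [pow_add]
  calc (∑ v : V6, S v * S (u+v) * S (v+w))
      = ∑ v : V6, (S u * S w) * (-1:ℝ)^((w2 v).val + (ip v (fun i => u i + w i + ((wt u:ZMod 2)+(wt w : ZMod 2)))).val) :=
        Finset.sum_congr rfl fun v _ => h1 v
    _ = (S u * S w) * (-8 * (-1:ℝ)^((w2 (fun i => u i + w i + ((wt u:ZMod 2)+(wt w : ZMod 2)))).val)) := by
        rw [← Finset.mul_sum, gaussR]
    _ = -8 * (S u * S w * S (u+w)) := by rw [bridge u w]; unfold S; ring

/- ### operator-level lemmas -/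
lemma hA (f : V6 → ℝ) : Aop (Aop f) = f := by
  funext u
  unfold Aop
  have h := S_sq u
  unfold S at h
  linear_combination f u * h

lemma shift (u v t : V6) : u + v + (v + t) = u + t := by
  rw [add_assoc, ← add_assoc v v t, addself, zero_add]

lemma BB (f : V6 → ℝ) (u : V6) :
    Bop (Bop f) u = (1/64) * ∑ t : V6, (∑ v : V6, S v * S (v+t)) * f (u+t) := by
  unfold Bop
  rw [Finset.mul_sum]
  have hinner : ∀ v : V6,
      (∑ v' : V6, (-1:ℝ)^(w2 v').val * f (u + v + v')) = ∑ t : V6, S (v+t) * f (u+t) := by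
    intro v
    refine (Fintype.sum_equiv (Equiv.addLeft v) _ _ ?_).symm
    intro t
    simp only [Equiv.coe_addLeft, S]
    rw [shift]
  calc (∑ v : V6, 1/8 * ((-1:ℝ)^(w2 v).val * (1/8 * ∑ v' : V6, (-1:ℝ)^(w2 v').val * f (u + v + v'))))
      = ∑ v : V6, ∑ t : V6, (1/64) * ((S v * S (v+t)) * f (u+t)) := by
        refine Finset.sum_congr rfl fun v _ => ?_
        rw [hinner v, Finset.mul_sum, Finset.mul_sum, Finset.mul_sum]
        refine Finset.sum_congr rfl fun t _ => ?_
        unfold S; ring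
    _ = (1/64) * ∑ t : V6, (∑ v : V6, S v * S (v+t)) * f (u+t) := by
        rw [Finset.sum_comm]
        simp only [Finset.mul_sum, Finset.sum_mul]

lemma hB (f : V6 → ℝ) : Bop (Bop f) = f := by
  funext u
  rw [BB]
  have : ∀ t : V6, (∑ v : V6, S v * S (v+t)) = if t = 0 then (64:ℝ) else 0 := by
    intro t
    rw [← bsqR t]
    exact Finset.sum_congr rfl fun v _ => by unfold S; rw [pow_add]
  simp only [this, ite_mul, zero_mul]
  have h2 : (∑ t : V6, if t = 0 then (64:ℝ) * f (u+t) else 0) = 64 * f u := by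
    rw [Finset.sum_eq_single (0:V6)]
    · simp
    · intro b _ hb; simp [hb]
    · intro h; simp at h
  rw [h2]
  ring

lemma BAB (f : V6 → ℝ) (u : V6) :
    Bop (Aop (Bop f)) u = -(1/64) * ∑ t : V6, (∑ v : V6, S v * S (u+v) * S (v+t)) * f (u+t) := by
  unfold Bop Aop
  rw [Finset.mul_sum]
  have hinner : ∀ v : V6,
      (∑ v' : V6, (-1:ℝ)^(w2 v').val * f (u + v + v')) = ∑ t : V6, S (v+t) * f (u+t) := by
    intro v
    refine (Fintype.sum_equiv (Equiv.addLeft v) _ _ ?_).symm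
    intro t
    simp only [Equiv.coe_addLeft, S]
    rw [shift]
  calc (∑ v : V6, 1/8 * ((-1:ℝ)^(w2 v).val * (-(-1:ℝ)^(w2 (u+v)).val * (1/8 * ∑ v' : V6, (-1:ℝ)^(w2 v').val * f (u + v + v')))))
      = ∑ v : V6, ∑ t : V6, -(1/64) * ((S v * S (u+v) * S (v+t)) * f (u+t)) := by
        refine Finset.sum_congr rfl fun v _ => ?_
        rw [hinner v, Finset.mul_sum, Finset.mul_sum, Finset.mul_sum, Finset.mul_sum]
        refine Finset.sum_congr rfl fun t _ => ?_
        unfold S; ring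
    _ = -(1/64) * ∑ t : V6, (∑ v : V6, S v * S (u+v) * S (v+t)) * f (u+t) := by
        rw [Finset.sum_comm]
        simp only [Finset.mul_sum, Finset.sum_mul, neg_mul, Finset.sum_neg_distrib]

lemma ABA (f : V6 → ℝ) (u : V6) :
    Aop (Bop (Aop f)) u = (1/8) * ∑ t : V6, (S u * S t * S (u+t)) * f (u+t) := by
  unfold Aop Bop
  simp only [Finset.mul_sum]
  exact Finset.sum_congr rfl fun t _ => by unfold S; ring

lemma hABA (f : V6 → ℝ) : Aop (Bop (Aop f)) = Bop (Aop (Bop f)) := by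
  funext u
  rw [ABA, BAB]
  rw [Finset.mul_sum, Finset.mul_sum]
  refine Finset.sum_congr rfl fun t _ => ?_
  rw [keyR_s9 u t]
  ring

/-- `(A ∘ B)³` is the identity: the concrete form of `(ξ_γ ξ_g)³ = 1`. -/
theorem AB_cubed_eq_id :
    ∀ f : (Fin 6 → ZMod 2) → ℝ, Aop (Bop (Aop (Bop (Aop (Bop f))))) = f := by
  intro f
  calc Aop (Bop (Aop (Bop (Aop (Bop f)))))
      = Bop (Aop (Bop (Bop (Aop (Bop f))))) := hABA (Bop (Aop (Bop f)))
    _ = Bop (Aop (Aop (Bop f))) := by rw [hB]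
    _ = Bop (Bop f) := by rw [hA]
    _ = f := hB f
end

section
/- Let A be the ℝ-linear operator on the space of functions V → ℝ defined by (A f)(u) = -(-1)^{w₂(u)}·f(u), and for d ∈ V let T_d be the translation operator (T_d f)(u) = f(u + d). Then for every d ∈ V, every f : V → ℝ and every u ∈ V: (A(T_d(A f)))(u) = (-1)^{w₂(d) + wt(d)·wt(u) + ⟨d,u⟩} · f(u + d), where the exponent is computed in ZMod 2. -/
/-- The translation operator `T_d`, `(T_d f)(u) = f(u + d)`. -/
def Tr (d : Fin 6 → ZMod 2) (f : (Fin 6 → ZMod 2) → ℝ) : (Fin 6 → ZMod 2) → ℝ :=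
  fun u => f (u + d)

set_option maxRecDepth 100000 in
set_option maxHeartbeats 4000000 in
lemma key_sign : ∀ d u : Fin 6 → ZMod 2,
    w2 u + w2 (u + d) = w2 d + (wt d : ZMod 2) * (wt u : ZMod 2) + ip d u := by decide

lemma negpow_mul (a b : ZMod 2) :
    -(-1 : ℝ) ^ a.val * -(-1 : ℝ) ^ b.val = (-1 : ℝ) ^ (a + b).val := by
  have h2 : ∀ c : ZMod 2, c = 0 ∨ c = 1 := by decide
  rcases h2 a with ha | ha <;> rcases h2 b with hb | hb <;> subst ha <;> subst hb <;> norm_num [show ZMod.val (2:ZMod 2) = 0 from rfl, show ZMod.val (1:ZMod 2) = 1 from rfl, show ZMod.val (0:ZMod 2) = 0 from rfl]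

/-- The conjugation rule `x̃_d^{ξ_γ} = (-1)^{w₂(d)} x̃_d x_{γ(d)}` in the grey block:
`(A (T_d (A f)))(u) = (-1)^{w₂(d) + wt(d)·wt(u) + ⟨d,u⟩} f(u + d)`. -/
theorem A_Td_A (d : Fin 6 → ZMod 2) (f : (Fin 6 → ZMod 2) → ℝ) (u : Fin 6 → ZMod 2) :
    Aop (Tr d (Aop f)) u =
      (-1 : ℝ) ^ (w2 d + (wt d : ZMod 2) * (wt u : ZMod 2) + ip d u).val * f (u + d) := by
  have h := key_sign d u
  rw [← h, ← negpow_mul]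
  simp [Aop, Tr]
  ring
end

section
/- Let M be a real 64×64 matrix (M : Matrix (Fin 64) (Fin 64) ℝ) with M³ = -1 (minus the identity matrix). Then the trace of M is an integer congruent to -1 modulo 3: there exists k : ℤ with Matrix.trace M = k and k ≡ 2 (mod 3). -/
open Polynomial Matrix Complex

/-- The primitive sixth root of unity `(1 + i√3)/2`. -/
noncomputable def ww : ℂ := ⟨1/2, Real.sqrt 3 / 2⟩

/-- Its conjugate `(1 - i√3)/2`. -/
noncomputable def ww' : ℂ := ⟨1/2, -(Real.sqrt 3 / 2)⟩

lemma sqrt3_pos : (0:ℝ) < Real.sqrt 3 := Real.sqrt_pos.2 (by norm_num)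

lemma ww_add : ww + ww' = 1 := by
  simp [ww, ww', Complex.ext_iff]
  norm_num

lemma ww_mul : ww * ww' = 1 := by
  have h3 : Real.sqrt 3 * Real.sqrt 3 = 3 := Real.mul_self_sqrt (by norm_num)
  simp [ww, ww', Complex.ext_iff, Complex.mul_re, Complex.mul_im]
  constructor
  · nlinarith [h3]
  · ring

lemma cube_root_cases {z : ℂ} (hz : z ^ 3 = -1) : z = -1 ∨ z = ww ∨ z = ww' := by
  have key : (z + 1) * ((z - ww) * (z - ww')) = 0 := by
    linear_combination hz - (z^2+z)*ww_add + (z+1)*ww_mul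
  rcases mul_eq_zero.1 key with h | h
  · exact Or.inl (eq_neg_of_add_eq_zero_left h)
  · rcases mul_eq_zero.1 h with h' | h'
    · exact Or.inr (Or.inl (sub_eq_zero.1 h'))
    · exact Or.inr (Or.inr (sub_eq_zero.1 h'))

lemma ww_ne : ww ≠ ww' := by
  simp only [ww, ww', ne_eq, Complex.ext_iff]
  intro h
  nlinarith [sqrt3_pos, h.2]

lemma neg_one_ne_ww : (-1 : ℂ) ≠ ww := by
  simp only [ww, ne_eq, Complex.ext_iff]
  intro h
  norm_num at h

lemma neg_one_ne_ww' : (-1 : ℂ) ≠ ww' := by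
  simp only [ww', ne_eq, Complex.ext_iff]
  intro h
  norm_num at h

/-- Any root of the characteristic polynomial of a complex matrix with `A³ = -1`
satisfies `z³ = -1`. -/
lemma eig_cube {n : Type*} [Fintype n] [DecidableEq n] (A : Matrix n n ℂ)
    (hA : A ^ 3 = -1) {z : ℂ} (hz : A.charpoly.IsRoot z) : z ^ 3 = -1 := by
  have hdet : (z • (1 : Matrix n n ℂ) - A).det = 0 := by
    have h1 : (z • (1 : Matrix n n ℂ) - A) = (charmatrix A).map (Polynomial.evalRingHom z) := by
      ext i j
      by_cases hij : i = j <;>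
        simp [hij, charmatrix_apply, Matrix.map_apply, Matrix.sub_apply, Matrix.smul_apply,
          Matrix.one_apply, Matrix.diagonal_apply]
    have h2 := RingHom.map_det (Polynomial.evalRingHom z) (charmatrix A)
    rw [RingHom.mapMatrix_apply] at h2
    rw [h1, ← h2]
    simpa [Matrix.charpoly] using hz
  obtain ⟨v, hv, hvz⟩ := Matrix.exists_mulVec_eq_zero_iff.2 hdet
  have hAv : A.mulVec v = z • v := by
    have h2 : (z • (1 : Matrix n n ℂ) - A).mulVec v = z • v - A.mulVec v := by
      rw [Matrix.sub_mulVec, Matrix.smul_mulVec, Matrix.one_mulVec]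
    rw [h2] at hvz
    linear_combination (norm := module) -hvz
  have h3 : (A ^ 3).mulVec v = z ^ 3 • v := by
    have he : A ^ 3 = A * (A * A) := by rw [pow_succ', pow_two]
    rw [he, ← Matrix.mulVec_mulVec, ← Matrix.mulVec_mulVec, hAv, Matrix.mulVec_smul, hAv,
      Matrix.mulVec_smul, Matrix.mulVec_smul, hAv, smul_smul, smul_smul]
    rw [pow_succ, pow_two]
  rw [hA] at h3
  have h4 : (z ^ 3 + 1) • v = 0 := by
    rw [Matrix.neg_mulVec, Matrix.one_mulVec] at h3
    rw [add_smul, ← h3]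
    simp
  rcases smul_eq_zero.1 h4 with h | h
  · exact eq_neg_of_add_eq_zero_left h
  · exact absurd h hv

/-- Counting sums for a multiset supported on three distinct values. -/
lemma count3 {x y w : ℂ} (hxy : x ≠ y) (hxw : x ≠ w) (hyw : y ≠ w) (s : Multiset ℂ)
    (hs : ∀ z ∈ s, z = x ∨ z = y ∨ z = w) :
    s.sum = (s.count x : ℂ) * x + (s.count y : ℂ) * y + (s.count w : ℂ) * w ∧
      Multiset.card s = s.count x + s.count y + s.count w := by
  induction s using Multiset.induction with
  | empty => simp
  | cons a s ih =>
    obtain ⟨h1, h2⟩ := ih (fun z hz => hs z (Multiset.mem_cons_of_mem hz))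
    have ha := hs a (Multiset.mem_cons_self a s)
    rcases ha with rfl | rfl | rfl <;>
      simp only [Multiset.sum_cons, Multiset.card_cons, Multiset.count_cons, h1, h2,
        if_pos rfl, hxy, hxw, hyw, hxy.symm, hxw.symm, hyw.symm, if_neg, if_false,
        Ne.symm, ite_eq_right_iff] <;>
      push_cast <;> constructor <;> ring

/-- A real `64 × 64` matrix `M` with `M³ = -1` has integer trace congruent to `-1 mod 3`. -/
theorem trace_of_cube_eq_neg_one (M : Matrix (Fin 64) (Fin 64) ℝ)
    (h : M ^ 3 = -1) :
    ∃ k : ℤ, Matrix.trace M = (k : ℝ) ∧ k ≡ 2 [ZMOD 3] := by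
  set A : Matrix (Fin 64) (Fin 64) ℂ := M.map Complex.ofRealHom with hAdef
  have hA : A ^ 3 = -1 := by
    have := congrArg (Complex.ofRealHom.mapMatrix) h
    rw [map_pow, map_neg, _root_.map_one, RingHom.mapMatrix_apply] at this
    exact this
  have htr : A.trace = (M.trace : ℂ) := by
    simp [Matrix.trace, Matrix.diag, hAdef, Matrix.map_apply]
  set R : Multiset ℂ := A.charpoly.roots with hR
  have hsum : A.trace = R.sum := Matrix.trace_eq_sum_roots_charpoly A
  have hcard : Multiset.card R = 64 := by
    have hdeg : A.charpoly.natDegree = 64 := by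
      rw [Matrix.charpoly_natDegree_eq_dim]; simp
    rw [hR, Polynomial.splits_iff_card_roots.1 (IsAlgClosed.splits A.charpoly), hdeg]
  have hmem : ∀ z ∈ R, z = -1 ∨ z = ww ∨ z = ww' := by
    intro z hz
    exact cube_root_cases (eig_cube A hA (Polynomial.mem_roots'.1 hz).2)
  obtain ⟨hS, hC⟩ := count3 neg_one_ne_ww neg_one_ne_ww' ww_ne R hmem
  set a := R.count (-1) with hadef
  set b := R.count ww with hbdef
  set c := R.count ww' with hcdef
  have heq : (M.trace : ℂ) = (a : ℂ) * (-1) + (b : ℂ) * ww + (c : ℂ) * ww' := by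
    rw [← htr, hsum, hS]
  have him := congrArg Complex.im heq
  have hre := congrArg Complex.re heq
  simp [ww, ww', Complex.add_im, Complex.mul_im, Complex.add_re, Complex.mul_re] at him hre
  have hbc : (b : ℝ) = c := by
    have h2 : (b : ℝ) * (Real.sqrt 3 / 2) = c * (Real.sqrt 3 / 2) := by linarith
    exact mul_right_cancel₀ (by positivity) h2
  have hcard' : (a : ℝ) + b + c = 64 := by
    have := hC
    rw [hcard] at this
    exact_mod_cast congrArg (Nat.cast : ℕ → ℝ) this.symm
  refine ⟨3 * (b : ℤ) - 64, ?_, ?_⟩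
  · push_cast
    nlinarith [hre, hbc, hcard']
  · show (3 * (b : ℤ) - 64) % 3 = 2 % 3
    omega
end
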